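/- The Clifford-Gegenbauer polynomials on B(1) satisfy C^α_{2t+1,μ,k}(x̱) = -2(α + 2t + 1) x̱ C^α_{2t,μ,k+1}(x̱), relating an odd-degree polynomial associated with order k to an even-degree polynomial associated with order k+1. -/

import Mathlib

open scoped BigOperators RealInnerProductSpace
open MeasureTheory

namespace CGDunkl

/-- The underlying Euclidean space `ℝ^m`. -/
abbrev V (m : ℕ) := EuclideanSpace ℝ (Fin m)

/-- The quadratic form `x ↦ -‖x‖²` on `ℝ^m`, whose Clifford algebra is `ℝ_{0,m}`
(so that `eᵢ eⱼ + eⱼ eᵢ = -2 δᵢⱼ`). -/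
noncomputable def Q (m : ℕ) : QuadraticForm ℝ (V m) :=
  - LinearMap.BilinMap.toQuadraticMap (innerₗ (V m) : LinearMap.BilinForm ℝ (V m))

/-- A (normed) model of the Clifford algebra `ℝ_{0,m}`: an `ℝ`-algebra isomorphism from
the Clifford algebra of `-‖·‖²` on `ℝ^m` to a normed algebra `A`. -/
abbrev CliffordModel (m : ℕ) (A : Type*) [NormedRing A] [NormedAlgebra ℝ A] :=
  CliffordAlgebra (Q m) ≃ₐ[ℝ] A

variable {m : ℕ} {A : Type*} [NormedRing A] [NormedAlgebra ℝ A]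

/-- The Clifford generators `e_j`. -/
noncomputable def ee (F : CliffordModel m A) (j : Fin m) : A :=
  F (CliffordAlgebra.ι (Q m) (EuclideanSpace.single j 1))

/-- The vector variable `x̱ = Σⱼ eⱼ xⱼ`. -/
noncomputable def xv (F : CliffordModel m A) (x : V m) : A :=
  F (CliffordAlgebra.ι (Q m) x)

/-- Clifford conjugation, the anti-involution with `conj eᵢ = -eᵢ`
(the composition of grade reversion and grade involution). -/
noncomputable def cconj (F : CliffordModel m A) (a : A) : A :=
  F (CliffordAlgebra.reverse (CliffordAlgebra.involute (F.symm a)))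

/-- The reflection in the hyperplane orthogonal to `α`. -/
noncomputable def reflect {m : ℕ} (α x : V m) : V m :=
  x - ((2 * ⟪α, x⟫) / ⟪α, α⟫) • α

/-- The data of a (reduced, normalized) root system `R = R₊ ∪ (-R₊)` in `ℝ^m`
together with a nonnegative `G`-invariant multiplicity function `κ`. -/
structure DunklData (m : ℕ) where
  /-- the root system -/
  R : Finset (V m)
  /-- the positive subsystem -/
  Rplus : Finset (V m)
  /-- the multiplicity function -/
  κ : V m → ℝ
  root_ne_zero : ∀ α ∈ R, α ≠ 0
  /-- normalization `⟨α, α⟩ = 2` -/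
  norm_two : ∀ α ∈ R, ⟪α, α⟫ = (2 : ℝ)
  /-- the root system is reduced -/
  reduced : ∀ α ∈ R, ∀ c : ℝ, c • α ∈ R → c = 1 ∨ c = -1
  /-- `R` is preserved by each reflection `r_α`, `α ∈ R` -/
  stable : ∀ α ∈ R, ∀ β ∈ R, reflect α β ∈ R
  /-- `R` is the union of `R₊` and `-R₊` -/
  split : ∀ α : V m, α ∈ R ↔ (α ∈ Rplus ∨ -α ∈ Rplus)
  pos_disjoint : ∀ α ∈ Rplus, -α ∉ Rplus
  /-- the multiplicity function is invariant under the reflection group -/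
  invariant : ∀ α ∈ R, ∀ β ∈ R, κ (reflect α β) = κ β
  nonneg : ∀ α ∈ R, 0 ≤ κ α

/-- `γ = Σ_{α ∈ R₊} κ_α`. -/
noncomputable def gammaK (D : DunklData m) : ℝ := ∑ α ∈ D.Rplus, D.κ α

/-- The Dunkl dimension `μ = m + 2γ`. -/
noncomputable def mu (D : DunklData m) : ℝ := m + 2 * gammaK D

/-- The Dunkl operator `T_i`, acting on functions with values in the Clifford algebra. -/
noncomputable def T (D : DunklData m) (i : Fin m) (f : V m → A) (x : V m) : A :=
  fderiv ℝ f x (EuclideanSpace.single i 1) +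
    ∑ α ∈ D.Rplus, (D.κ α * (α i) / ⟪α, x⟫) • (f x - f (reflect α x))

/-- The Dunkl Dirac operator `D_k = Σⱼ eⱼ T_j`. -/
noncomputable def Dirac (F : CliffordModel m A) (D : DunklData m) (f : V m → A) (x : V m) : A :=
  ∑ j : Fin m, ee F j * T D j f x

/-- The Dunkl Laplacian `Δ_k = Σᵢ Tᵢ²`. -/
noncomputable def Lap (D : DunklData m) (f : V m → A) (x : V m) : A :=
  ∑ i : Fin m, T D i (T D i f) x

/-- The Euler operator `𝔼 = Σᵢ xᵢ ∂_{xᵢ}`. -/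
noncomputable def Euler (f : V m → A) (x : V m) : A := fderiv ℝ f x x

/-- The angular Dunkl Dirac operator (Gamma operator) `Γ_k = D_k x̱ + μ + 𝔼`. -/
noncomputable def Gam (F : CliffordModel m A) (D : DunklData m) (f : V m → A) (x : V m) : A :=
  Dirac F D (fun y => xv F y * f y) x + mu D • f x + Euler f x

/-- The regular set: the complement of the hyperplane arrangement, where the pointwise
formula for the Dunkl operators is valid. -/
def Reg (D : DunklData m) : Set (V m) := {x | ∀ α ∈ D.Rplus, ⟪α, x⟫ ≠ 0}

/-- Left solid inner Dunkl monogenic of order `k`: a smooth function, homogeneous (as a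
polynomial) of degree `k`, with `D_k M = 0`. -/
def IsInner (F : CliffordModel m A) (D : DunklData m) (k : ℕ) (M : V m → A) : Prop :=
  ContDiff ℝ ⊤ M ∧ (∀ (c : ℝ) (x : V m), M (c • x) = c ^ k • M x) ∧
    ∀ x ∈ Reg D, Dirac F D M x = 0

/-- Left solid outer Dunkl monogenic of order `k`: left Dunkl monogenic on `ℝ^m ∖ {0}` and
homogeneous of degree `-(k + μ - 1)`. -/
def IsOuter (F : CliffordModel m A) (D : DunklData m) (k : ℕ) (Qf : V m → A) : Prop :=
  ContDiffOn ℝ ⊤ Qf {x | x ≠ 0} ∧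
    (∀ c : ℝ, 0 < c → ∀ x : V m, x ≠ 0 →
      Qf (c • x) = ((c : ℝ) ^ (-((k : ℝ) + mu D - 1)) : ℝ) • Qf x) ∧
    ∀ x ∈ Reg D, x ≠ 0 → Dirac F D Qf x = 0

/-- The weight function `w_k(x) = Π_{α ∈ R₊} |⟨x, α⟩|^{2 κ_α}`. -/
noncomputable def w (D : DunklData m) (x : V m) : ℝ :=
  ∏ α ∈ D.Rplus, |⟪x, α⟫| ^ (2 * D.κ α)


variable {m : ℕ} {A : Type*} [NormedRing A] [NormedAlgebra ℝ A]

/-- The operator `D_α = (1-|x̱|²) D_k - 2(α+1) x̱` on the unit ball. -/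
noncomputable def Dal (F : CliffordModel m A) (D : DunklData m) (a : ℝ)
    (f : V m → A) (x : V m) : A :=
  (1 - ‖x‖ ^ 2) • Dirac F D f x - (2 * (a + 1)) • (xv F x * f x)

/-- The Clifford-Gegenbauer polynomials on `B(1)`:
`C^α_{t,μ}(M_k) = D_α D_{α+1} ⋯ D_{α+t-1}[M_k]` (with `C^α_{0,μ}(M_k) = M_k`). -/
noncomputable def CG (F : CliffordModel m A) (D : DunklData m) :
    ℝ → ℕ → (V m → A) → (V m → A)
  | _, 0, M => M
  | a, t + 1, M => Dal F D a (CG F D (a + 1) t M)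


/-!
On the regular set the operator `D_α` maps `b(|x|²) M_k` to `b̃(|x|²) x̱ M_k` and
`B(|x|²) x̱ M_k` to `B̃(|x|²) M_k`, where `b ↦ b̃` and `B ↦ B̃` are first-order differential
operators on polynomials (`evenToOdd`, `oddToEven`); the second one rests on the identity
`D_k (x̱ f) = -x̱ D_k f - (μ + 2𝔼) f`, so that `D_k (x̱ M_k) = -(μ + 2k) M_k`. Hence
`C^α_{2t,μ}(M_k)` and `C^α_{2t+1,μ}(M_k)` have radial coefficients `cgEvenPoly (μ + 2k) α t` and
`cgOddPoly (μ + 2k) α t`, and the theorem becomes the polynomial identity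
`cgOddPoly K α t = -2(α + 2t + 1) cgEvenPoly (K + 2) α t`. It follows by induction on `t` from the
commutation `evenToOdd α ∘ oddToEven K (α + 1) = oddToEven (K + 2) α ∘ evenToOdd (α + 1)`.
Finally, the coefficients `c`, `c'` are these polynomials because `|x|²` takes every positive
value on a ray through a regular point where the monogenic does not vanish.
-/

open Polynomial

lemma sum_smul_single (x : V m) : ∑ i, x i • EuclideanSpace.single i (1 : ℝ) = x := by
  simpa using (EuclideanSpace.basisFun (Fin m) ℝ).sum_repr x

section Clifford

variable (F : CliffordModel m A)

lemma Q_apply (x : V m) : Q m x = -⟪x, x⟫ := by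
  simp [Q]

noncomputable def xvL : V m →L[ℝ] A :=
  LinearMap.toContinuousLinearMap (F.toAlgHom.toLinearMap.comp (CliffordAlgebra.ι (Q m)))

lemma xvL_apply (x : V m) : xvL F x = xv F x := rfl

lemma hasFDerivAt_xv (x : V m) : HasFDerivAt (xv F) (xvL F) x := (xvL F).hasFDerivAt

lemma ee_eq_xv_single (i : Fin m) : ee F i = xv F (EuclideanSpace.single i 1) := rfl

lemma xv_sub (x y : V m) : xv F (x - y) = xv F x - xv F y := map_sub (xvL F) x y

lemma xv_smul (c : ℝ) (x : V m) : xv F (c • x) = c • xv F x := map_smul (xvL F) c x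

lemma xv_mul_self (x : V m) : xv F x * xv F x = (-‖x‖ ^ 2) • (1 : A) := by
  have h := congrArg F (CliffordAlgebra.ι_sq_scalar (Q m) x)
  rw [map_mul, AlgEquiv.commutes, Q_apply, real_inner_self_eq_norm_sq,
    Algebra.algebraMap_eq_smul_one] at h
  exact h

lemma xv_mul_xv_mul_self (x : V m) (a : A) : xv F x * (xv F x * a) = (-‖x‖ ^ 2) • a := by
  rw [← mul_assoc, xv_mul_self, smul_mul_assoc, one_mul]

lemma xv_mul_comm (x y : V m) :
    xv F x * xv F y = -(xv F y * xv F x) - (2 * ⟪x, y⟫) • (1 : A) := by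
  have h := congrArg F (CliffordAlgebra.ι_mul_ι_add_swap (Q := Q m) x y)
  rw [map_add, map_mul, map_mul, AlgEquiv.commutes, Algebra.algebraMap_eq_smul_one,
    QuadraticMap.polar, Q_apply, Q_apply, Q_apply, real_inner_add_add_self] at h
  change xv F x * xv F y + xv F y * xv F x = _ at h
  rw [show -(⟪x, x⟫ + 2 * ⟪x, y⟫ + ⟪y, y⟫) - -⟪x, x⟫ - -⟪y, y⟫ = -(2 * ⟪x, y⟫) by ring] at h
  linear_combination (norm := module) h

lemma sum_smul_ee (x : V m) : ∑ i, x i • ee F i = xv F x := by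
  simp_rw [ee_eq_xv_single, ← xv_smul, ← xvL_apply, ← map_sum, sum_smul_single]

lemma ee_mul_self (j : Fin m) : ee F j * ee F j = -1 := by
  simp [ee_eq_xv_single, xv_mul_self]

lemma ee_mul_xv (j : Fin m) (x : V m) : ee F j * xv F x = -(xv F x * ee F j) - (2 * x j) • 1 := by
  simp [ee_eq_xv_single, xv_mul_comm F (EuclideanSpace.single j 1) x,
    EuclideanSpace.inner_single_left]

lemma xv_pow_even (x : V m) (i : ℕ) : xv F x ^ (2 * i) = ((-‖x‖ ^ 2) ^ i) • (1 : A) := by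
  rw [pow_mul, sq, xv_mul_self, _root_.smul_pow, one_pow]

lemma xv_pow_odd (x : V m) (i : ℕ) : xv F x ^ (2 * i + 1) = ((-‖x‖ ^ 2) ^ i) • xv F x := by
  rw [pow_succ, xv_pow_even, smul_mul_assoc, one_mul]

lemma xv_mul_ne_zero {x : V m} (hx : x ≠ 0) {a : A} (ha : a ≠ 0) : xv F x * a ≠ 0 := by
  intro h
  have h2 := xv_mul_xv_mul_self F x a
  rw [h, mul_zero, eq_comm, smul_eq_zero] at h2
  simp_all

end Clifford

lemma dense_setOf_inner_ne_zero {E : Type*} [NormedAddCommGroup E] [InnerProductSpace ℝ E]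
    {α : E} (hα : α ≠ 0) : Dense {x : E | ⟪α, x⟫ ≠ 0} := by
  have hker : interior (LinearMap.ker (innerₛₗ ℝ α) : Set E) = ∅ := by
    by_contra h
    have htop := Submodule.eq_top_of_nonempty_interior' _ (Set.nonempty_iff_ne_empty.2 h)
    have hαα : ⟪α, α⟫ = 0 := LinearMap.mem_ker.1 (htop ▸ Submodule.mem_top)
    exact hα (inner_self_eq_zero.1 hαα)
  exact interior_eq_empty_iff_dense_compl.1 hker

section Reflection

variable (D : DunklData m)

lemma inner_self_of_mem_Rplus {α : V m} (h : α ∈ D.Rplus) : ⟪α, α⟫ = 2 :=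
  D.norm_two α ((D.split α).2 (Or.inl h))

lemma reflect_of_inner_self_eq_two {α : V m} (h : ⟪α, α⟫ = 2) (x : V m) :
    reflect α x = x - ⟪α, x⟫ • α := by
  rw [reflect, h]
  norm_num

lemma inner_reflect_right {α : V m} (h : ⟪α, α⟫ = 2) (y x : V m) :
    ⟪y, reflect α x⟫ = ⟪reflect α y, x⟫ := by
  simp only [reflect_of_inner_self_eq_two h, inner_sub_left, inner_sub_right,
    real_inner_smul_left, real_inner_smul_right, real_inner_comm α y, real_inner_comm x α]
  ring

lemma norm_reflect {α : V m} (h : ⟪α, α⟫ = 2) (x : V m) : ‖reflect α x‖ = ‖x‖ := by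
  rw [← sq_eq_sq₀ (norm_nonneg _) (norm_nonneg _), ← real_inner_self_eq_norm_sq,
    ← real_inner_self_eq_norm_sq, reflect_of_inner_self_eq_two h]
  simp only [inner_sub_left, inner_sub_right, real_inner_smul_left, real_inner_smul_right,
    real_inner_comm x α, h]
  ring

lemma isOpen_Reg : IsOpen (Reg D) := by
  have : Reg D = ⋂ α ∈ D.Rplus, {x : V m | ⟪α, x⟫ ≠ 0} := by
    ext x
    simp [Reg]
  rw [this]
  exact isOpen_biInter_finset fun α _ ↦ isOpen_ne_fun (continuous_const.inner continuous_id)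
    continuous_const

lemma dense_Reg : Dense (Reg D) := by
  have : Reg D = ⋂ α ∈ (D.Rplus : Set (V m)), {x : V m | ⟪α, x⟫ ≠ 0} := by
    ext x
    simp [Reg]
  rw [this]
  refine dense_biInter_of_isOpen
    (fun α _ ↦ isOpen_ne_fun (continuous_const.inner continuous_id) continuous_const)
    D.Rplus.countable_toSet fun α hα ↦ dense_setOf_inner_ne_zero ?_
  rintro rfl
  simpa using inner_self_of_mem_Rplus D hα

lemma reflect_mem_Reg {α : V m} (hα : α ∈ D.Rplus) {x : V m} (hx : x ∈ Reg D) :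
    reflect α x ∈ Reg D := by
  intro β hβ
  have hR : ∀ γ ∈ D.Rplus, γ ∈ D.R := fun γ hγ ↦ (D.split γ).2 (Or.inl hγ)
  rw [inner_reflect_right (inner_self_of_mem_Rplus D hα)]
  rcases (D.split _).1 (D.stable α (hR α hα) β (hR β hβ)) with h | h
  · exact hx _ h
  · simpa using hx _ h

lemma smul_mem_Reg {c : ℝ} (hc : c ≠ 0) {x : V m} (hx : x ∈ Reg D) : c • x ∈ Reg D :=
  fun β hβ ↦ by simpa [real_inner_smul_right, hc] using hx β hβ

lemma exists_mem_Reg_ne_zero [Nontrivial (V m)] {X : Type*} [TopologicalSpace X] [T2Space X]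
    [Zero X] {f : V m → X} (hf : Continuous f)
    (h : ∃ x, f x ≠ 0) : ∃ x ∈ Reg D, x ≠ 0 ∧ f x ≠ 0 := by
  have hdense : Dense (Reg D ∩ {0}ᶜ) :=
    (dense_Reg D).inter_of_isOpen_left (dense_compl_singleton 0) (isOpen_Reg D)
  obtain ⟨x, ⟨hx, hx0⟩, hxf⟩ := hdense.exists_mem_open (isOpen_ne_fun hf continuous_const) h
  exact ⟨x, hx, hx0, hxf⟩

end Reflection

lemma hasFDerivAt_eval_norm_sq {E : Type*} [NormedAddCommGroup E] [InnerProductSpace ℝ E]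
    (p : ℝ[X]) (x : E) :
    HasFDerivAt (fun y : E ↦ p.eval (‖y‖ ^ 2))
      ((2 * p.derivative.eval (‖x‖ ^ 2)) • innerSL ℝ x) x := by
  refine ((p.hasDerivAt _).comp_hasFDerivAt x (hasFDerivAt_id x).norm_sq).congr_fderiv ?_
  ext v
  simp
  ring

section DunklOperators

variable (F : CliffordModel m A) (D : DunklData m)

lemma T_congr {f g : V m → A} (hfg : ∀ y ∈ Reg D, f y = g y) {x : V m} (hx : x ∈ Reg D)
    (i : Fin m) : T D i f x = T D i g x := by
  have hev : f =ᶠ[nhds x] g := Filter.eventually_of_mem ((isOpen_Reg D).mem_nhds hx) hfg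
  rw [T, T, hev.fderiv_eq, hfg x hx]
  congr 1
  exact Finset.sum_congr rfl fun β hβ ↦ by rw [hfg _ (reflect_mem_Reg D hβ hx)]

lemma Dal_congr {f g : V m → A} (hfg : ∀ y ∈ Reg D, f y = g y) {x : V m} (hx : x ∈ Reg D)
    (a : ℝ) : Dal F D a f x = Dal F D a g x := by
  simp only [Dal, Dirac, T_congr D hfg hx, hfg x hx]

noncomputable def diracGrad (f : V m → A) (x : V m) : A :=
  ∑ j, ee F j * fderiv ℝ f x (EuclideanSpace.single j 1)

noncomputable def diracDiff (f : V m → A) (x : V m) : A :=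
  ∑ α ∈ D.Rplus, (D.κ α / ⟪α, x⟫) • (xv F α * (f x - f (reflect α x)))

lemma Dirac_eq_diracGrad_add_diracDiff (f : V m → A) (x : V m) :
    Dirac F D f x = diracGrad F f x + diracDiff F D f x := by
  simp only [Dirac, T, diracGrad, diracDiff, mul_add, Finset.sum_add_distrib, Finset.mul_sum,
    mul_smul_comm]
  congr 1
  rw [Finset.sum_comm]
  refine Finset.sum_congr rfl fun α _ ↦ ?_
  simp_rw [← sum_smul_ee F α, Finset.sum_mul, Finset.smul_sum, smul_mul_assoc, smul_smul]
  exact Finset.sum_congr rfl fun j _ ↦ by ring_nf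

lemma diracGrad_radial_smul (p : ℝ[X]) {f : V m → A} {x : V m} (hf : DifferentiableAt ℝ f x) :
    diracGrad F (fun y ↦ p.eval (‖y‖ ^ 2) • f y) x =
      (2 * p.derivative.eval (‖x‖ ^ 2)) • (xv F x * f x) + p.eval (‖x‖ ^ 2) • diracGrad F f x := by
  rw [diracGrad, diracGrad, ((hasFDerivAt_eval_norm_sq p x).fun_smul hf.hasFDerivAt).fderiv,
    ← sum_smul_ee F x, Finset.sum_mul, Finset.smul_sum, Finset.smul_sum, ← Finset.sum_add_distrib]
  refine Finset.sum_congr rfl fun j _ ↦ ?_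
  simp only [add_apply, smul_apply, ContinuousLinearMap.smulRight_apply, innerSL_apply_apply,
    EuclideanSpace.inner_single_right, mul_add, mul_smul_comm, smul_mul_assoc, smul_smul]
  rw [add_comm]
  congr 2
  simp

lemma diracDiff_radial_smul (p : ℝ[X]) (f : V m → A) (x : V m) :
    diracDiff F D (fun y ↦ p.eval (‖y‖ ^ 2) • f y) x = p.eval (‖x‖ ^ 2) • diracDiff F D f x := by
  rw [diracDiff, diracDiff, Finset.smul_sum]
  refine Finset.sum_congr rfl fun α hα ↦ ?_
  rw [norm_reflect (inner_self_of_mem_Rplus D hα), ← smul_sub, mul_smul_comm, smul_comm]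

lemma Dirac_radial_smul (p : ℝ[X]) {f : V m → A} {x : V m} (hf : DifferentiableAt ℝ f x) :
    Dirac F D (fun y ↦ p.eval (‖y‖ ^ 2) • f y) x =
      (2 * p.derivative.eval (‖x‖ ^ 2)) • (xv F x * f x) + p.eval (‖x‖ ^ 2) • Dirac F D f x := by
  rw [Dirac_eq_diracGrad_add_diracDiff, Dirac_eq_diracGrad_add_diracDiff,
    diracGrad_radial_smul F p hf, diracDiff_radial_smul, smul_add, add_assoc]

lemma diracGrad_xv_mul {f : V m → A} {x : V m} (hf : DifferentiableAt ℝ f x) :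
    diracGrad F (fun y ↦ xv F y * f y) x =
      -(xv F x * diracGrad F f x) - (m : ℝ) • f x - (2 : ℝ) • fderiv ℝ f x x := by
  set u : Fin m → A := fun j ↦ fderiv ℝ f x (EuclideanSpace.single j 1)
  have hder : ∀ j, fderiv ℝ (fun y ↦ xv F y * f y) x (EuclideanSpace.single j 1) =
      xv F x * u j + ee F j * f x := fun j ↦ by
    rw [((hasFDerivAt_xv F x).fun_mul' hf.hasFDerivAt).fderiv]
    simp [u, xvL_apply, ee_eq_xv_single]
  have hEuler : ∑ j, x j • u j = fderiv ℝ f x x := by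
    simp only [u, ← map_smul, ← map_sum, sum_smul_single]
  have hterm : ∀ j, ee F j * (xv F x * u j + ee F j * f x) =
      -(xv F x * (ee F j * u j)) - (2 : ℝ) • (x j • u j) - f x := fun j ↦ by
    rw [mul_add, ← mul_assoc, ← mul_assoc, ee_mul_xv, ee_mul_self]
    simp only [sub_mul, neg_mul, smul_mul_assoc, one_mul, mul_assoc]
    module
  simp only [diracGrad, hder, hterm, Finset.sum_sub_distrib, Finset.sum_neg_distrib,
    ← Finset.mul_sum, ← Finset.smul_sum, hEuler, Finset.sum_const, Finset.card_univ,
    Fintype.card_fin]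
  rw [← Nat.cast_smul_eq_nsmul ℝ]
  abel

lemma xv_mul_sub_reflect {α : V m} (h : ⟪α, α⟫ = 2) (x : V m) (a b : A) :
    xv F α * (xv F x * a - xv F (reflect α x) * b) =
      -(xv F x * (xv F α * (a - b))) - (2 * ⟪α, x⟫) • a := by
  have hαα : xv F α * xv F α = (-2 : ℝ) • 1 := by
    rw [xv_mul_self, ← real_inner_self_eq_norm_sq, h]
  simp only [reflect_of_inner_self_eq_two h, xv_sub, xv_smul, mul_sub, sub_mul, mul_smul_comm,
    smul_mul_assoc, ← mul_assoc, hαα, xv_mul_comm F α x]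
  simp only [neg_mul, one_mul, mul_assoc]
  module

lemma diracDiff_xv_mul {x : V m} (hx : x ∈ Reg D) (f : V m → A) :
    diracDiff F D (fun y ↦ xv F y * f y) x =
      -(xv F x * diracDiff F D f x) - (2 * gammaK D) • f x := by
  rw [diracDiff, diracDiff, gammaK, Finset.mul_sum D.Rplus D.κ 2, Finset.sum_smul, Finset.mul_sum,
    ← Finset.sum_neg_distrib, ← Finset.sum_sub_distrib]
  refine Finset.sum_congr rfl fun α hα ↦ ?_
  rw [xv_mul_sub_reflect F (inner_self_of_mem_Rplus D hα), smul_sub, smul_neg, mul_smul_comm,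
    smul_smul]
  congr 2
  field_simp [hx α hα]

lemma Dirac_xv_mul {x : V m} (hx : x ∈ Reg D) {f : V m → A} (hf : DifferentiableAt ℝ f x) :
    Dirac F D (fun y ↦ xv F y * f y) x =
      -(xv F x * Dirac F D f x) - mu D • f x - (2 : ℝ) • fderiv ℝ f x x := by
  rw [Dirac_eq_diracGrad_add_diracDiff, Dirac_eq_diracGrad_add_diracDiff, diracGrad_xv_mul F hf,
    diracDiff_xv_mul F D hx, mu, mul_add]
  module

end DunklOperators

section RadialPolynomials

/-- `D_α (b(|x|²) M) = (evenToOdd α b)(|x|²) x̱ M` for a Dunkl monogenic `M`. -/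
noncomputable def evenToOdd (a : ℝ) (p : ℝ[X]) : ℝ[X] :=
  2 * (1 - X) * derivative p - C (2 * (a + 1)) * p

/-- `D_α (B(|x|²) x̱ M) = (oddToEven (μ + 2k) α B)(|x|²) M` for a Dunkl monogenic `M` of
order `k`. -/
noncomputable def oddToEven (K a : ℝ) (p : ℝ[X]) : ℝ[X] :=
  (1 - X) * (-(2 * X * derivative p) - C K * p) + C (2 * (a + 1)) * (X * p)

noncomputable def cgEvenPoly (K : ℝ) : ℝ → ℕ → ℝ[X]
  | _, 0 => 1
  | a, s + 1 => oddToEven K a (evenToOdd (a + 1) (cgEvenPoly K (a + 1 + 1) s))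

noncomputable def cgOddPoly (K a : ℝ) (s : ℕ) : ℝ[X] := evenToOdd a (cgEvenPoly K (a + 1) s)

lemma cgEvenPoly_succ (K a : ℝ) (s : ℕ) :
    cgEvenPoly K a (s + 1) = oddToEven K a (cgOddPoly K (a + 1) s) := rfl

lemma evenToOdd_C_mul (a c : ℝ) (p : ℝ[X]) : evenToOdd a (C c * p) = C c * evenToOdd a p := by
  simp only [evenToOdd, derivative_C_mul]
  ring

lemma oddToEven_C_mul (K a c : ℝ) (p : ℝ[X]) :
    oddToEven K a (C c * p) = C c * oddToEven K a p := by
  simp only [oddToEven, derivative_C_mul]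
  ring

lemma evenToOdd_oddToEven (K a : ℝ) (p : ℝ[X]) :
    evenToOdd a (oddToEven K (a + 1) p) = oddToEven (K + 2) a (evenToOdd (a + 1) p) := by
  simp only [evenToOdd, oddToEven, derivative_sub, derivative_mul,
    derivative_neg, derivative_C, derivative_X, derivative_one, derivative_ofNat, map_add,
    map_mul, map_one, map_ofNat]
  ring

lemma cgOddPoly_eq (K : ℝ) (s : ℕ) (a : ℝ) :
    cgOddPoly K a s = C (-(2 * (a + 2 * s + 1))) * cgEvenPoly (K + 2) a s := by
  induction s generalizing a with
  | zero =>
    simp only [cgOddPoly, cgEvenPoly, evenToOdd, derivative_one, mul_zero, zero_sub, mul_one,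
      CharP.cast_eq_zero, add_zero, map_neg]
  | succ s ih =>
    rw [cgOddPoly, cgEvenPoly_succ, ih, oddToEven_C_mul, evenToOdd_C_mul, evenToOdd_oddToEven,
      ← cgOddPoly, ← cgEvenPoly_succ]
    congr 2
    push_cast
    ring

end RadialPolynomials

lemma fderiv_apply_self_of_homogeneous {E X : Type*} [NormedAddCommGroup E] [NormedSpace ℝ E]
    [NormedAddCommGroup X] [NormedSpace ℝ X] {f : E → X} {k : ℕ}
    (hf : ∀ (c : ℝ) (y : E), f (c • y) = c ^ k • f y) {x : E} (hdx : DifferentiableAt ℝ f x) :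
    fderiv ℝ f x x = (k : ℝ) • f x := by
  have hray : HasDerivAt (fun c : ℝ ↦ f (c • x)) (fderiv ℝ f x x) 1 := by
    have hsmul : HasDerivAt (fun c : ℝ ↦ c • x) x 1 := by
      simpa using (hasDerivAt_id (1 : ℝ)).smul_const x
    have hdx' : HasFDerivAt f (fderiv ℝ f x) ((1 : ℝ) • x) := by
      rw [one_smul]
      exact hdx.hasFDerivAt
    exact hdx'.comp_hasDerivAt 1 hsmul
  have hpow : HasDerivAt (fun c : ℝ ↦ c ^ k • f x) ((k : ℝ) • f x) 1 := by
    simpa using (hasDerivAt_pow k (1 : ℝ)).smul_const (f x)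
  exact hray.unique (by simpa only [hf] using hpow)

section Monogenic

variable {F : CliffordModel m A} {D : DunklData m} {k : ℕ} {M : V m → A}

lemma IsInner.differentiableAt (hM : IsInner F D k M) (x : V m) : DifferentiableAt ℝ M x :=
  hM.1.differentiable (by simp) x

lemma Dal_radial_smul (hM : IsInner F D k M) {x : V m} (hx : x ∈ Reg D) (a : ℝ) (p : ℝ[X]) :
    Dal F D a (fun y ↦ p.eval (‖y‖ ^ 2) • M y) x =
      (evenToOdd a p).eval (‖x‖ ^ 2) • (xv F x * M x) := by
  rw [Dal, Dirac_radial_smul F D p (hM.differentiableAt x), hM.2.2 x hx, mul_smul_comm]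
  simp only [evenToOdd, eval_sub, eval_mul, eval_C, eval_X, eval_one, eval_ofNat, smul_zero,
    add_zero]
  module

lemma Dal_radial_smul_xv_mul (hM : IsInner F D k M) {x : V m} (hx : x ∈ Reg D) (a : ℝ)
    (p : ℝ[X]) :
    Dal F D a (fun y ↦ p.eval (‖y‖ ^ 2) • (xv F y * M y)) x =
      (oddToEven (mu D + 2 * k) a p).eval (‖x‖ ^ 2) • M x := by
  have hMd := hM.differentiableAt x
  rw [Dal, Dirac_radial_smul F D p ((hasFDerivAt_xv F x).fun_mul' hMd.hasFDerivAt).differentiableAt,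
    Dirac_xv_mul F D hx hMd, hM.2.2 x hx, fderiv_apply_self_of_homogeneous hM.2.1 hMd,
    mul_smul_comm, xv_mul_xv_mul_self]
  simp only [oddToEven, eval_add, eval_sub, eval_mul, eval_neg, eval_C, eval_X, eval_one,
    eval_ofNat, mul_zero, neg_zero, zero_sub]
  module

lemma CG_eq_cgPoly (hM : IsInner F D k M) (s : ℕ) :
    (∀ a, ∀ x ∈ Reg D, CG F D a (2 * s) M x =
      (cgEvenPoly (mu D + 2 * k) a s).eval (‖x‖ ^ 2) • M x) ∧
    (∀ a, ∀ x ∈ Reg D, CG F D a (2 * s + 1) M x =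
      (cgOddPoly (mu D + 2 * k) a s).eval (‖x‖ ^ 2) • (xv F x * M x)) := by
  have odd_of_even : ∀ s, (∀ a, ∀ x ∈ Reg D, CG F D a (2 * s) M x =
      (cgEvenPoly (mu D + 2 * k) a s).eval (‖x‖ ^ 2) • M x) →
      ∀ a, ∀ x ∈ Reg D, CG F D a (2 * s + 1) M x =
        (cgOddPoly (mu D + 2 * k) a s).eval (‖x‖ ^ 2) • (xv F x * M x) := fun s heven a x hx ↦ by
    rw [CG, Dal_congr F D (heven (a + 1)) hx, Dal_radial_smul hM hx, cgOddPoly]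
  induction s with
  | zero =>
    have heven : ∀ a, ∀ x ∈ Reg D, CG F D a (2 * 0) M x =
        (cgEvenPoly (mu D + 2 * k) a 0).eval (‖x‖ ^ 2) • M x := fun a x _ ↦ by
      simp [CG, cgEvenPoly]
    exact ⟨heven, odd_of_even 0 heven⟩
  | succ s ih =>
    have heven : ∀ a, ∀ x ∈ Reg D, CG F D a (2 * (s + 1)) M x =
        (cgEvenPoly (mu D + 2 * k) a (s + 1)).eval (‖x‖ ^ 2) • M x := fun a x hx ↦ by
      rw [show 2 * (s + 1) = 2 * s + 1 + 1 by ring, CG, Dal_congr F D (ih.2 (a + 1)) hx,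
        Dal_radial_smul_xv_mul hM hx, cgEvenPoly_succ]
    exact ⟨heven, odd_of_even (s + 1) heven⟩

end Monogenic

section Uniqueness

variable (F : CliffordModel m A) (D : DunklData m)

lemma sum_smul_xv_pow_odd (s : Finset ℕ) (a : ℕ → ℝ) (x : V m) :
    ∑ i ∈ s, a i • xv F x ^ (2 * i + 1) =
      (∑ i ∈ s, C (a i) * (-X) ^ i).eval (‖x‖ ^ 2) • xv F x := by
  simp only [xv_pow_odd, smul_smul, ← Finset.sum_smul, eval_finsetSum, eval_mul, eval_C,
    eval_pow, eval_neg, eval_X]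

lemma sum_smul_xv_pow_even (s : Finset ℕ) (a : ℕ → ℝ) (x : V m) :
    ∑ i ∈ s, a i • xv F x ^ (2 * i) = (∑ i ∈ s, C (a i) * (-X) ^ i).eval (‖x‖ ^ 2) • (1 : A) := by
  simp only [xv_pow_even, smul_smul, ← Finset.sum_smul, eval_finsetSum, eval_mul, eval_C,
    eval_pow, eval_neg, eval_X]

lemma nontrivial_of_homogeneous {E X : Type*} [AddCommGroup E] [Module ℝ E] [AddCommGroup X]
    [Module ℝ X] {f : E → X} {k : ℕ} (hf : ∀ (c : ℝ) (y : E), f (c • y) = c ^ (k + 1) • f y)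
    (h : ∃ x, f x ≠ 0) : Nontrivial E := by
  obtain ⟨x, hx⟩ := h
  refine ⟨x, 0, fun hx0 ↦ hx ?_⟩
  simpa [hx0] using hf 0 x

lemma eq_zero_of_eval_norm_sq_smul_eq_zero [Nontrivial (V m)] {f : V m → A} {k : ℕ}
    (hf : Continuous f) (hhom : ∀ (c : ℝ) (y : V m), f (c • y) = c ^ k • f y)
    (hf0 : ∃ x, f x ≠ 0) {p : ℝ[X]} (h : ∀ x ∈ Reg D, p.eval (‖x‖ ^ 2) • f x = 0) : p = 0 := by
  obtain ⟨x₁, hx₁, hx₁0, hfx₁⟩ := exists_mem_Reg_ne_zero D hf hf0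
  refine eq_zero_of_infinite_isRoot p ((Set.Ioi_infinite 0).mono fun r (hr : 0 < r) ↦ ?_)
  have hnorm : 0 < ‖x₁‖ := norm_pos_iff.2 hx₁0
  set c := √r / ‖x₁‖
  have hc : c ≠ 0 := (div_pos (Real.sqrt_pos.2 hr) hnorm).ne'
  have hcx : ‖c • x₁‖ ^ 2 = r := by
    rw [norm_smul, Real.norm_eq_abs, mul_pow, sq_abs, div_pow, Real.sq_sqrt hr.le]
    field_simp
  have hroot := h _ (smul_mem_Reg D hc hx₁)
  rw [hcx, hhom, smul_eq_zero, smul_eq_zero] at hroot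
  simpa [hc, hfx₁] using hroot

variable {F D} {k : ℕ} {M : V m → A} [Nontrivial (V m)]

lemma IsInner.eq_cgEvenPoly (hM : IsInner F D k M) (hM0 : ∃ x, M x ≠ 0) {a : ℝ} {s : ℕ}
    {p : ℝ[X]} (h : ∀ x ∈ Reg D, CG F D a (2 * s) M x = p.eval (‖x‖ ^ 2) • M x) :
    p = cgEvenPoly (mu D + 2 * k) a s := by
  refine sub_eq_zero.1 (eq_zero_of_eval_norm_sq_smul_eq_zero D hM.1.continuous hM.2.1 hM0
    fun x hx ↦ ?_)
  rw [eval_sub, sub_smul, sub_eq_zero, ← h x hx, (CG_eq_cgPoly hM s).1 a x hx]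

lemma IsInner.eq_cgOddPoly (hM : IsInner F D k M) (hM0 : ∃ x, M x ≠ 0) {a : ℝ} {s : ℕ}
    {p : ℝ[X]} (h : ∀ x ∈ Reg D, CG F D a (2 * s + 1) M x = p.eval (‖x‖ ^ 2) • (xv F x * M x)) :
    p = cgOddPoly (mu D + 2 * k) a s := by
  have hhom (r : ℝ) (y : V m) : xv F (r • y) * M (r • y) = r ^ (k + 1) • (xv F y * M y) := by
    rw [xv_smul, hM.2.1, smul_mul_smul_comm, pow_succ']
  have hne : ∃ x, xv F x * M x ≠ 0 := by
    obtain ⟨x, -, hx0, hMx⟩ := exists_mem_Reg_ne_zero D hM.1.continuous hM0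
    exact ⟨x, xv_mul_ne_zero F hx0 hMx⟩
  refine sub_eq_zero.1 (eq_zero_of_eval_norm_sq_smul_eq_zero D (f := fun y ↦ xv F y * M y)
    ((xvL F).continuous.mul hM.1.continuous) hhom hne fun x hx ↦ ?_)
  rw [eval_sub, sub_smul, sub_eq_zero, ← h x hx, (CG_eq_cgPoly hM s).2 a x hx]

end Uniqueness

theorem cg_odd_eq_xv_mul_cg_even_shifted_general
    {m : ℕ} {A : Type*} [NormedRing A] [NormedAlgebra ℝ A]
    (F : CliffordModel m A) (D : DunklData m)
    (k : ℕ) (M N : V m → A)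
    (hM : IsInner F D k M) (hN : IsInner F D (k + 1) N)
    (hM0 : ∃ x, M x ≠ 0) (hN0 : ∃ x, N x ≠ 0)
    (α : ℝ) (t : ℕ)
    (c c' : V m → A)
    (hc_odd : ∃ (n : ℕ) (a : ℕ → ℝ), ∀ x : V m,
      c x = ∑ i ∈ Finset.range (n + 1), a i • xv F x ^ (2 * i + 1))
    (hc'_even : ∃ (n : ℕ) (a : ℕ → ℝ), ∀ x : V m,
      c' x = ∑ i ∈ Finset.range (n + 1), a i • xv F x ^ (2 * i))
    (hc : ∀ x ∈ Reg D, CG F D α (2 * t + 1) M x = c x * M x)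
    (hc' : ∀ x ∈ Reg D, CG F D α (2 * t) N x = c' x * N x) :
    ∀ x : V m, c x = (-(2 * (α + 2 * t + 1))) • (xv F x * c' x) := by
  obtain ⟨n, a, hc_eq⟩ := hc_odd
  obtain ⟨n', a', hc'_eq⟩ := hc'_even
  simp only [sum_smul_xv_pow_odd, sum_smul_xv_pow_even] at hc_eq hc'_eq
  have : Nontrivial (V m) := nontrivial_of_homogeneous hN.2.1 hN0
  have hodd := hM.eq_cgOddPoly hM0 fun x hx ↦ by rw [hc x hx, hc_eq, smul_mul_assoc]
  have heven := hN.eq_cgEvenPoly hN0 fun x hx ↦ by rw [hc' x hx, hc'_eq, smul_mul_assoc, one_mul]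
  rw [show mu D + 2 * ((k + 1 : ℕ) : ℝ) = mu D + 2 * k + 2 by push_cast; ring] at heven
  intro x
  rw [hc_eq, hc'_eq, hodd, heven, cgOddPoly_eq, eval_mul, eval_C, mul_smul_comm, mul_one,
    smul_smul]

/-- `C^α_{2t+1,μ,k}(x̱) = -2(α+2t+1) x̱ C^α_{2t,μ,k+1}(x̱)`: the odd-degree
Clifford-Gegenbauer polynomial (in `x̱`) associated with order `k` equals `-2(α+2t+1) x̱`
times the even-degree one associated with order `k+1`.  The polynomial parts are encoded by
odd (resp. even) polynomials `c` (resp. `c'`) in `x̱` with `C^α_{2t+1,μ}(M_k) = c ⬝ M_k`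
(resp. `C^α_{2t,μ}(N_{k+1}) = c' ⬝ N_{k+1}`) for nonzero monogenics `M_k`, `N_{k+1}`. -/
theorem cg_odd_eq_xv_mul_cg_even_shifted
    {m : ℕ} {A : Type*} [NormedRing A] [NormedAlgebra ℝ A]
    (F : CliffordModel m A) (D : DunklData m)
    (k : ℕ) (M N : V m → A)
    (hM : IsInner F D k M) (hN : IsInner F D (k + 1) N)
    (hM0 : ∃ x, M x ≠ 0) (hN0 : ∃ x, N x ≠ 0)
    (α : ℝ) (hα : -1 < α) (t : ℕ)
    (c c' : V m → A)
    (hc_odd : ∃ (n : ℕ) (a : ℕ → ℝ), ∀ x : V m,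
      c x = ∑ i ∈ Finset.range (n + 1), a i • xv F x ^ (2 * i + 1))
    (hc'_even : ∃ (n : ℕ) (a : ℕ → ℝ), ∀ x : V m,
      c' x = ∑ i ∈ Finset.range (n + 1), a i • xv F x ^ (2 * i))
    (hc : ∀ x ∈ Reg D, CG F D α (2 * t + 1) M x = c x * M x)
    (hc' : ∀ x ∈ Reg D, CG F D α (2 * t) N x = c' x * N x) :
    ∀ x : V m, c x = (-(2 * (α + 2 * t + 1))) • (xv F x * c' x) :=
  cg_odd_eq_xv_mul_cg_even_shifted_general F D k M N hM hN hM0 hN0 α t c c' hc_odd hc'_even hc hc'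

end CGDunkl
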